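/- Let M be a minimal DFA and k ∈ ℕ, and let N be any DFA obtained from M by a (possibly empty) sequence of merge steps, where each step merges a surviving state q into a distinct surviving state p such that q and p are k-similar as states of the original DFA M and in-level_M(q) ≤ in-level_M(p). Then for every surviving state p' of N, d(L_M(p'), L_N(p')) ≤ max(0, k − in-level_M(p')). -/

import Mathlib

/-- The distance `d(L, L')` between two languages: the least `ℓ ∈ ℕ` such that
`L` and `L'` agree on all words of length at least `ℓ` (with `min ∅ = ∞`). -/
noncomputable def langDist {α : Type} (L L' : Set (List α)) : ℕ∞ :=
  sInf {n : ℕ∞ | ∃ ℓ : ℕ, n = (ℓ : ℕ∞) ∧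
    ∀ w : List α, ℓ ≤ w.length → (w ∈ L ↔ w ∈ L')}

/-- A deterministic finite automaton with a partial transition function. -/
structure PDFA (α σ : Type) where
  step : σ → α → Option σ
  start : σ
  accept : Set σ

namespace PDFA

variable {α σ : Type}

/-- Running the partial DFA from state `q` on the word `w`. -/
def evalFrom (M : PDFA α σ) (q : σ) (w : List α) : Option σ :=
  w.foldl (fun o a => o.bind fun r => M.step r a) (some q)

/-- Running the partial DFA from the start state. -/
def eval (M : PDFA α σ) (w : List α) : Option σ :=
  M.evalFrom M.start w

/-- The right-language `L_M(q)` of the state `q`. -/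
def rightLang (M : PDFA α σ) (q : σ) : Set (List α) :=
  {w | ∃ p ∈ M.accept, M.evalFrom q w = some p}

/-- The language recognised by the partial DFA. -/
def accepts (M : PDFA α σ) : Set (List α) :=
  {w | ∃ p ∈ M.accept, M.eval w = some p}

/-- The left-language `δ⁻¹(q)` of the state `q`: all words leading to `q`. -/
def leftLang (M : PDFA α σ) (q : σ) : Set (List α) :=
  {w | M.eval w = some q}

/-- `in-level_M(q)`: the supremum of the lengths of words leading to `q`. -/
noncomputable def inLevel (M : PDFA α σ) (q : σ) : ℕ∞ :=
  ⨆ w ∈ M.leftLang q, (w.length : ℕ∞)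

/-- A DFA is minimal if all states are reachable and have pairwise
distinct right-languages. -/
def IsMinimal (M : PDFA α σ) : Prop :=
  (∀ q : σ, ∃ w : List α, M.eval w = some q) ∧
  ∀ q p : σ, M.rightLang q = M.rightLang p → q = p

end PDFA

/-- The distance between a state of `M` and a state of `N`. -/
noncomputable def stateDist {α σ τ : Type} (M : PDFA α σ) (N : PDFA α τ)
    (q : σ) (p : τ) : ℕ∞ :=
  langDist (M.rightLang q) (N.rightLang p)

/-- Two states `q` of `M` and `p` of `N` are `k`-similar if
`d(q, p) + min(k, in-level_M(q), in-level_N(p)) ≤ k`. -/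
def kSimSt {α σ τ : Type} (M : PDFA α σ) (N : PDFA α τ) (k : ℕ) (q : σ) (p : τ) : Prop :=
  stateDist M N q p + min (k : ℕ∞) (min (M.inLevel q) (N.inLevel p)) ≤ (k : ℕ∞)

/-- Two DFAs are `k`-similar if their languages differ only on words of length `< k`. -/
def kSimDFA {α σ τ : Type} (M : PDFA α σ) (N : PDFA α τ) (k : ℕ) : Prop :=
  ∀ w ∈ symmDiff M.accepts N.accepts, w.length < k

/-- Merging state `q` into state `p`: every transition ending in `q` is redirected
to end in `p`, the start state becomes `p` if it was `q`, and `q` is deleted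
(removed from the accepting states; it becomes unreachable). -/
def PDFA.merge {α σ : Type} [DecidableEq σ] (M : PDFA α σ) (q p : σ) : PDFA α σ where
  step r a := (M.step r a).map fun x => if x = q then p else x
  start := if M.start = q then p else M.start
  accept := M.accept \ {q}

/-- `MergeSeq M k N S` holds if the DFA `N` with surviving state set `S` is obtained
from `M` by a (possibly empty) sequence of merge steps, each merging a surviving
state `q` into a distinct surviving state `p` such that `q ∼_k p` as states of the
original DFA `M` and `in-level_M(q) ≤ in-level_M(p)`. -/
inductive MergeSeq {α σ : Type} [DecidableEq σ] (M : PDFA α σ) (k : ℕ) :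
    PDFA α σ → Set σ → Prop where
  | refl : MergeSeq M k M Set.univ
  | step {N : PDFA α σ} {S : Set σ} {q p : σ} :
      MergeSeq M k N S → q ∈ S → p ∈ S → q ≠ p →
      kSimSt M M k q p → M.inLevel q ≤ M.inLevel p →
      MergeSeq M k (N.merge q p) (S \ {q})


/-!
Along the merge sequence every surviving state `s` keeps its right-language on all words `w`
with `k ≤ |w| + in-level_M(s)`; the bound is this invariant rewritten. Along every transition
of the merged automaton the in-level in `M` grows by at least one (all states of `M` being
reachable), and redirecting from `q` to `p` keeps this because `in-level_M(q) ≤ in-level_M(p)`.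
So when a word `a v` read from `s` enters `q`, its remainder satisfies `k ≤ |v| + in-level_M(q)`,
and `k`-similarity then gives `d(q, p) ≤ |v|`: `q` and `p` agree on `v`, and redirecting to `p`
does not change membership.
-/

theorem langDist_le_iff {α : Type} {L L' : Set (List α)} {m : ℕ∞} :
    langDist L L' ≤ m ↔ ∀ w : List α, m ≤ w.length → (w ∈ L ↔ w ∈ L') := by
  induction m using ENat.recTopCoe with
  | top => simp
  | coe n =>
    refine ⟨fun h w hw => ?_,
      fun h => sInf_le ⟨n, rfl, fun w hw => h w (by exact_mod_cast hw)⟩⟩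
    obtain ⟨_, ⟨ℓ, rfl, hagree⟩, hlt⟩ :=
      sInf_lt_iff.mp (h.trans_lt (ENat.natCast_lt_natCast.mpr n.lt_succ_self))
    exact hagree w ((Nat.lt_succ_iff.mp (by exact_mod_cast hlt)).trans (by exact_mod_cast hw))

namespace PDFA

variable {α σ : Type} (M : PDFA α σ)

theorem foldl_step_eq_bind (o : Option σ) (v : List α) :
    v.foldl (fun o a => o.bind fun r => M.step r a) o = o.bind (M.evalFrom · v) := by
  cases o with
  | some q => rfl
  | none => induction v with
    | nil => rfl
    | cons a v ih => exact ih

theorem evalFrom_cons (s : σ) (a : α) (v : List α) :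
    M.evalFrom s (a :: v) = (M.step s a).bind (M.evalFrom · v) :=
  M.foldl_step_eq_bind _ v

theorem evalFrom_append (s : σ) (u v : List α) :
    M.evalFrom s (u ++ v) = (M.evalFrom s u).bind (M.evalFrom · v) := by
  rw [evalFrom, List.foldl_append, foldl_step_eq_bind, evalFrom]

@[simp]
theorem evalFrom_nil (s : σ) : M.evalFrom s [] = some s :=
  rfl

theorem nil_mem_rightLang (s : σ) : [] ∈ M.rightLang s ↔ s ∈ M.accept := by
  simp [rightLang, evalFrom]

variable {M}

theorem cons_mem_rightLang {s r : σ} {a : α} (h : M.step s a = some r) (v : List α) :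
    a :: v ∈ M.rightLang s ↔ v ∈ M.rightLang r := by
  simp [rightLang, evalFrom_cons, h]

theorem cons_notMem_rightLang {s : σ} {a : α} (h : M.step s a = none) (v : List α) :
    a :: v ∉ M.rightLang s := by
  simp [rightLang, evalFrom_cons, h]

theorem inLevel_add_one_le_of_step {s r : σ} {a : α} (hs : ∃ u, M.eval u = some s)
    (h : M.step s a = some r) : M.inLevel s + 1 ≤ M.inLevel r := by
  rw [inLevel, ENat.biSup_add (show (M.leftLang s).Nonempty from hs)]
  refine iSup₂_le fun u hu => ?_
  have hua : M.eval (u ++ [a]) = some r := by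
    rw [eval, evalFrom_append, show M.evalFrom M.start u = some s from hu]
    simpa [evalFrom_cons] using h
  simpa [inLevel] using
    le_iSup₂ (f := fun w (_ : w ∈ M.leftLang r) => (w.length : ℕ∞)) _ hua

theorem merge_step_eq_some [DecidableEq σ] {q p s r' : σ} {a : α} :
    (M.merge q p).step s a = some r' ↔
      ∃ r, M.step s a = some r ∧ (if r = q then p else r) = r' :=
  Option.map_eq_some_iff

end PDFA

theorem stateDist_le_of_kSimSt {α σ τ : Type} {M : PDFA α σ} {N : PDFA α τ} {k : ℕ}
    {q : σ} {p : τ} (hsim : kSimSt M N k q p) (hlev : M.inLevel q ≤ N.inLevel p) {n : ℕ∞}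
    (hn : (k : ℕ∞) ≤ n + M.inLevel q) : stateDist M N q p ≤ n := by
  rw [kSimSt, min_eq_left hlev] at hsim
  rcases le_total (k : ℕ∞) (M.inLevel q) with hk | hk
  · rw [min_eq_left hk] at hsim
    exact ((ENat.add_le_add_iff_right (ENat.natCast_ne_top k)).mp
      (hsim.trans (zero_add (k : ℕ∞)).ge)).trans zero_le
  · rw [min_eq_right hk] at hsim
    exact (ENat.add_le_add_iff_right (ne_top_of_le_ne_top (ENat.natCast_ne_top k) hk)).mp
      (hsim.trans hn)

theorem mem_rightLang_iff_of_kSimSt {α σ τ : Type} {M : PDFA α σ} {N : PDFA α τ} {k : ℕ}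
    {q : σ} {p : τ} (hsim : kSimSt M N k q p) (hlev : M.inLevel q ≤ N.inLevel p)
    {v : List α} (hv : (k : ℕ∞) ≤ v.length + M.inLevel q) :
    v ∈ M.rightLang q ↔ v ∈ N.rightLang p :=
  langDist_le_iff.mp (stateDist_le_of_kSimSt hsim hlev hv) v le_rfl

section Redirect

variable {α σ : Type} [DecidableEq σ] {q p : σ}

theorem ite_mem_sdiff {S : Set σ} (hp : p ∈ S) (hqp : q ≠ p) {r : σ} (hr : r ∈ S) :
    (if r = q then p else r) ∈ S \ {q} := by
  split_ifs with hrq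
  exacts [⟨hp, hqp.symm⟩, ⟨hr, hrq⟩]

theorem PDFA.inLevel_le_inLevel_ite {M : PDFA α σ} (hlev : M.inLevel q ≤ M.inLevel p) (r : σ) :
    M.inLevel r ≤ M.inLevel (if r = q then p else r) := by
  split_ifs with hrq
  exacts [hrq ▸ hlev, le_rfl]

theorem PDFA.mem_rightLang_iff_ite {M : PDFA α σ} {k : ℕ} (hsim : kSimSt M M k q p)
    (hlev : M.inLevel q ≤ M.inLevel p)
    {r : σ} {v : List α} (hv : (k : ℕ∞) ≤ v.length + M.inLevel r) :
    v ∈ M.rightLang r ↔ v ∈ M.rightLang (if r = q then p else r) := by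
  split_ifs with hrq
  · subst hrq
    exact mem_rightLang_iff_of_kSimSt hsim hlev hv
  · rfl

end Redirect

structure MergeInvariant {α σ : Type} (M N : PDFA α σ) (k : ℕ) (S : Set σ) : Prop where
  step_mem : ∀ {s a r}, N.step s a = some r → r ∈ S
  accept_eq : N.accept = M.accept ∩ S
  inLevel_add_one_le : ∀ {s a r}, N.step s a = some r → M.inLevel s + 1 ≤ M.inLevel r
  rightLang_iff : ∀ s ∈ S, ∀ w : List α, (k : ℕ∞) ≤ w.length + M.inLevel s →
    (w ∈ M.rightLang s ↔ w ∈ N.rightLang s)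

namespace MergeInvariant

variable {α σ : Type} {M N : PDFA α σ} {k : ℕ} {S : Set σ}

theorem refl (hreach : ∀ q, ∃ w, M.eval w = some q) : MergeInvariant M M k Set.univ where
  step_mem _ := Set.mem_univ _
  accept_eq := (Set.inter_univ _).symm
  inLevel_add_one_le h := PDFA.inLevel_add_one_le_of_step (hreach _) h
  rightLang_iff _ _ _ _ := Iff.rfl

variable [DecidableEq σ] {q p : σ}

theorem rightLang_merge_iff (h : MergeInvariant M N k S) (hp : p ∈ S) (hqp : q ≠ p)
    (hsim : kSimSt M M k q p) (hlev : M.inLevel q ≤ M.inLevel p) :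
    ∀ s ∈ S \ {q}, ∀ w : List α, (k : ℕ∞) ≤ w.length + M.inLevel s →
      (w ∈ M.rightLang s ↔ w ∈ (N.merge q p).rightLang s) := by
  intro s hs w
  induction w generalizing s with
  | nil =>
    intro _
    rw [PDFA.nil_mem_rightLang, PDFA.nil_mem_rightLang, PDFA.merge, h.accept_eq]
    simp [hs.1, hs.2]
  | cons a v ih =>
    intro hw
    rw [h.rightLang_iff s hs.1 _ hw]
    cases hr : N.step s a with
    | none =>
      exact iff_of_false (PDFA.cons_notMem_rightLang hr v)
        (PDFA.cons_notMem_rightLang (by simp [PDFA.merge, hr]) v)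
    | some r =>
      have hvr : (k : ℕ∞) ≤ v.length + M.inLevel r := by
        refine hw.trans ?_
        rw [List.length_cons, Nat.cast_succ, add_assoc, add_comm 1]
        exact add_le_add_right (h.inLevel_add_one_le hr) _
      rw [PDFA.cons_mem_rightLang hr,
        PDFA.cons_mem_rightLang (PDFA.merge_step_eq_some.mpr ⟨r, hr, rfl⟩),
        ← h.rightLang_iff r (h.step_mem hr) v hvr, PDFA.mem_rightLang_iff_ite hsim hlev hvr]
      exact ih _ (ite_mem_sdiff hp hqp (h.step_mem hr))
        (hvr.trans (add_le_add_right (PDFA.inLevel_le_inLevel_ite hlev r) _))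

theorem merge (h : MergeInvariant M N k S) (hp : p ∈ S) (hqp : q ≠ p)
    (hsim : kSimSt M M k q p) (hlev : M.inLevel q ≤ M.inLevel p) :
    MergeInvariant M (N.merge q p) k (S \ {q}) where
  step_mem hs := by
    obtain ⟨r, hr, rfl⟩ := PDFA.merge_step_eq_some.mp hs
    exact ite_mem_sdiff hp hqp (h.step_mem hr)
  accept_eq := by rw [PDFA.merge, h.accept_eq, Set.inter_sdiff_assoc]
  inLevel_add_one_le hs := by
    obtain ⟨r, hr, rfl⟩ := PDFA.merge_step_eq_some.mp hs
    exact (h.inLevel_add_one_le hr).trans (PDFA.inLevel_le_inLevel_ite hlev r)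
  rightLang_iff := h.rightLang_merge_iff hp hqp hsim hlev

end MergeInvariant

theorem MergeSeq.mergeInvariant {α σ : Type} [DecidableEq σ] {M N : PDFA α σ} {k : ℕ}
    {S : Set σ} (hreach : ∀ q, ∃ w, M.eval w = some q) (hseq : MergeSeq M k N S) :
    MergeInvariant M N k S := by
  induction hseq with
  | refl => exact MergeInvariant.refl hreach
  | step _ _ hp hqp hsim hlev ih => exact ih.merge hp hqp hsim hlev

theorem merge_preserves_distance_general {α σ : Type} [DecidableEq σ]
    (M : PDFA α σ) (hM : M.IsMinimal) (k : ℕ)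
    (N : PDFA α σ) (S : Set σ) (hseq : MergeSeq M k N S) :
    ∀ p' ∈ S, langDist (M.rightLang p') (N.rightLang p')
      ≤ max 0 ((k : ℕ∞) - M.inLevel p') := by
  intro p' hp'
  rw [max_eq_right zero_le, langDist_le_iff]
  intro w hw
  exact (hseq.mergeInvariant hM.1).rightLang_iff p' hp' w (tsub_le_iff_right.mp hw)

/-- During merging, the right-language of each surviving state stays close to its
original right-language: if `N` (with surviving states `S`) is obtained from the
minimal DFA `M` by merge steps, then for every `p' ∈ S`,
`d(L_M(p'), L_N(p')) ≤ max(0, k − in-level_M(p'))`. -/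
theorem merge_preserves_distance {α σ : Type} [Fintype α] [Fintype σ] [DecidableEq σ]
    (M : PDFA α σ) (hM : M.IsMinimal) (k : ℕ)
    (N : PDFA α σ) (S : Set σ) (hseq : MergeSeq M k N S) :
    ∀ p' ∈ S, langDist (M.rightLang p') (N.rightLang p')
      ≤ max 0 ((k : ℕ∞) - M.inLevel p') :=
  merge_preserves_distance_general M hM k N S hseq
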